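/- arXiv:1410.7075 — 2 statements merged into one kernel-verified Lean document; each statement's English description precedes it below -/
import Mathlib

section
/- Let 0 < p < 1. There exists a constant c_p > 0, depending only on p and λ = sup_k m_k, such that for every martingale f = (f^{(n)})_{n≥0} in the martingale Hardy space H_p(G_m) and every integer n ≥ 1, the Vilenkin–Fourier coefficient satisfies |f̂(n)| ≤ c_p · n^{1/p−1} · ‖f‖_{H_p}. -/
/-! Choose `K` with `M_K ≤ n < M_{K+1}`. Since `ψ_n` is constant on the cylinders of rank `K+1`,
the martingale property gives `f̂(n) = ∫ f^{(K+1)} ψ̄_n`. The function `f^{(K+1)}` is constant on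
these cylinders, which have measure `M_{K+1}⁻¹`, so `|f^{(K+1)}|^p ≤ M_{K+1} ‖f‖_{H_p}^p` pointwise;
writing `|f^{(K+1)}| = |f^{(K+1)}|^{1-p} |f^{(K+1)}|^p` then gives
`‖f^{(K+1)}‖₁ ≤ M_{K+1}^{1/p-1} ‖f‖_{H_p}`, and `M_{K+1} = m_K M_K ≤ λ n`. -/

open MeasureTheory Filter ENNReal Finset

noncomputable section

/-- The Vilenkin group `G_m`: complete direct product of cyclic groups `ℤ_{m_k}`. -/
abbrev Gm (m : ℕ → ℕ) : Type := ∀ k : ℕ, ZMod (m k)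

/-- The generalized powers `M_0 = 1`, `M_{k+1} = m_k M_k`. -/
def Mgen (m : ℕ → ℕ) : ℕ → ℕ
  | 0 => 1
  | k + 1 => m k * Mgen m k

/-- The digits of `n` in the generalized number system `n = Σ_j n_j M_j`. -/
def digit (m : ℕ → ℕ) (n j : ℕ) : ℕ := (n / Mgen m j) % m j

/-- The generalized Rademacher functions `r_k(x) = exp(2πi x_k / m_k)`. -/
def rade (m : ℕ → ℕ) (k : ℕ) (x : Gm m) : ℂ :=
  Complex.exp (2 * Real.pi * Complex.I * ((x k).val : ℂ) / (m k : ℂ))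

/-- The Vilenkin system `ψ_n = Π_k r_k^{n_k}` (all digits `n_k` with `k > n` vanish). -/
def psi (m : ℕ → ℕ) (n : ℕ) (x : Gm m) : ℂ :=
  ∏ k ∈ Finset.range (n + 1), rade m k x ^ digit m n k

/-- The cylinder `I_n(x) = {y : y_0 = x_0, ..., y_{n-1} = x_{n-1}}`. -/
def cyl (m : ℕ → ℕ) (n : ℕ) (x : Gm m) : Set (Gm m) := {y | ∀ j < n, y j = x j}

/-- Vilenkin–Fourier coefficient of an integrable function. -/
def fcoef (m : ℕ → ℕ) (μ : Measure (Gm m)) (f : Gm m → ℂ) (k : ℕ) : ℂ :=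
  ∫ x, f x * (starRingEnd ℂ) (psi m k x) ∂μ

/-- Partial sums of the Vilenkin–Fourier series of a function. -/
def Spart (m : ℕ → ℕ) (μ : Measure (Gm m)) (f : Gm m → ℂ) (n : ℕ) (x : Gm m) : ℂ :=
  ∑ k ∈ Finset.range n, fcoef m μ f k * psi m k x

/-- The Dirichlet kernels `D_n = Σ_{k<n} ψ_k`. -/
def Dker (m : ℕ → ℕ) (n : ℕ) (x : Gm m) : ℂ :=
  ∑ k ∈ Finset.range n, psi m k x

/-- `f = (f^{(n)})` is a martingale w.r.t. the filtration generated by the cylinders: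
each `f^{(n)}` is integrable and, for `n ≤ k`, the conditional expectation of `f^{(k)}`
on the `n`-th σ-algebra (the average on each cylinder `I_n(x)`) equals `f^{(n)}`. -/
def IsVMartingale (m : ℕ → ℕ) (μ : Measure (Gm m)) (f : ℕ → Gm m → ℂ) : Prop :=
  (∀ n, Integrable (f n) μ) ∧
  ∀ n k : ℕ, n ≤ k → ∀ x : Gm m, f n x = (Mgen m n : ℂ) * ∫ t in cyl m n x, f k t ∂μ

/-- Vilenkin–Fourier coefficient of a martingale: `lim_k ∫ f^{(k)} ψ̄_i dμ`; since the
integral is independent of `k` once `M_k > i`, and `M_{i+1} > i`, we take `k = i+1`. -/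
def mfhat (m : ℕ → ℕ) (μ : Measure (Gm m)) (f : ℕ → Gm m → ℂ) (i : ℕ) : ℂ :=
  ∫ x, f (i + 1) x * (starRingEnd ℂ) (psi m i x) ∂μ

/-- The `H_p` (quasi-)norm of a martingale: `‖sup_n |f^{(n)}|‖_{L^p(μ)}`, as an `ℝ≥0∞`. -/
def HpNorm (m : ℕ → ℕ) (μ : Measure (Gm m)) (p : ℝ) (f : ℕ → Gm m → ℂ) : ℝ≥0∞ :=
  (∫⁻ x, (⨆ n, (‖f n x‖₊ : ℝ≥0∞)) ^ p ∂μ) ^ (1 / p)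

theorem integral_eq_sum_setIntegral_fiber {X ι E : Type*} [MeasurableSpace X]
    [NormedAddCommGroup E] [NormedSpace ℝ E] [Fintype ι] [MeasurableSpace ι]
    [MeasurableSingletonClass ι] {μ : Measure X} {ρ : X → ι} (hρ : Measurable ρ)
    {h : X → E} (hh : Integrable h μ) :
    ∫ x, h x ∂μ = ∑ a, ∫ x in ρ ⁻¹' {a}, h x ∂μ := by
  rw [← integral_iUnion_fintype (fun a => hρ (measurableSet_singleton a))
    (pairwise_disjoint_fiber ρ) fun _ => hh.integrableOn, ← Set.preimage_iUnion,
    Set.iUnion_of_singleton, Set.preimage_univ, setIntegral_univ]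

theorem lintegral_le_rpow_mul_lintegral_rpow {X : Type*} [MeasurableSpace X] {μ : Measure X}
    {F : X → ℝ≥0∞} (hF : AEMeasurable F μ) {p : ℝ} (hp0 : 0 < p) (hp1 : p ≤ 1) {C : ℝ≥0∞}
    (hFC : ∀ x, F x ^ p ≤ C) :
    ∫⁻ x, F x ∂μ ≤ C ^ (1 / p - 1) * ∫⁻ x, F x ^ p ∂μ := by
  have hq : 0 ≤ 1 / p - 1 := sub_nonneg.2 (one_le_one_div hp0 hp1)
  rw [← lintegral_const_mul'' _ (hF.pow_const p)]
  refine lintegral_mono fun x => ?_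
  calc F x = (F x ^ p) ^ (1 / p - 1) * F x ^ p := by
        rw [← ENNReal.rpow_mul, ← ENNReal.rpow_add_of_nonneg _ _ (by positivity) hp0.le]
        field_simp
        rw [sub_add_cancel, ENNReal.rpow_one]
    _ ≤ C ^ (1 / p - 1) * F x ^ p := by gcongr; exact hFC x

theorem lintegral_rpow_enorm_le_lintegral_rpow_iSup {X E : Type*} [MeasurableSpace X]
    [ENorm E] {μ : Measure X} (f : ℕ → X → E) {p : ℝ} (hp : 0 ≤ p) (K : ℕ) :
    ∫⁻ x, ‖f K x‖ₑ ^ p ∂μ ≤ ∫⁻ x, (⨆ n, ‖f n x‖ₑ) ^ p ∂μ :=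
  lintegral_mono fun x => ENNReal.rpow_le_rpow (le_iSup (fun n => ‖f n x‖ₑ) K) hp

section Vilenkin
variable {m : ℕ → ℕ}

theorem Mgen_pos (hm : ∀ k, 0 < m k) (k : ℕ) : 0 < Mgen m k := by
  induction k with
  | zero => exact Nat.one_pos
  | succ k ih => exact Nat.mul_pos (hm k) ih

theorem Mgen_mono (hm : ∀ k, 0 < m k) : Monotone (Mgen m) :=
  monotone_nat_of_le_succ fun k => Nat.le_mul_of_pos_left _ (hm k)

theorem lt_Mgen (hm2 : ∀ k, 2 ≤ m k) (k : ℕ) : k < Mgen m k := by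
  induction k with
  | zero => exact Nat.one_pos
  | succ k ih =>
    calc k + 1 < 2 * Mgen m k := by omega
      _ ≤ Mgen m (k + 1) := Nat.mul_le_mul_right _ (hm2 k)

theorem exists_Mgen_le_lt_Mgen_succ (hm2 : ∀ k, 2 ≤ m k) {n : ℕ} (hn : 1 ≤ n) :
    ∃ K, Mgen m K ≤ n ∧ n < Mgen m (K + 1) := by
  have hex : ∃ K, n < Mgen m K := ⟨n, lt_Mgen hm2 n⟩
  obtain ⟨K, hK⟩ := Nat.exists_eq_add_one_of_ne_zero ((Nat.find_pos hex).2 (not_lt.2 hn)).ne'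
  refine ⟨K, not_lt.1 (Nat.find_min hex (by omega)), hK ▸ Nat.find_spec hex⟩

theorem digit_eq_zero_of_lt_Mgen {n j : ℕ} (h : n < Mgen m j) : digit m n j = 0 := by
  rw [digit, Nat.div_eq_of_lt h, Nat.zero_mod]

theorem measurableSet_cyl (K : ℕ) (x : Gm m) : MeasurableSet (cyl m K x) := by
  have h : cyl m K x = ⋂ j ∈ Set.Iio K, (fun y : Gm m => y j) ⁻¹' {x j} := by
    ext y; simp [cyl]
  rw [h]
  exact MeasurableSet.biInter (Set.to_countable _) fun j _ =>
    measurable_pi_apply j (measurableSet_singleton _)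

theorem cyl_eq_of_mem {K : ℕ} {x y : Gm m} (hy : y ∈ cyl m K x) : cyl m K y = cyl m K x := by
  ext z
  exact ⟨fun h j hj => (h j hj).trans (hy j hj), fun h j hj => (h j hj).trans (hy j hj).symm⟩

theorem psi_eq_of_mem_cyl (hm : ∀ k, 0 < m k) {n K : ℕ} (h : n < Mgen m K) {x y : Gm m}
    (hy : y ∈ cyl m K x) : psi m n y = psi m n x := by
  refine Finset.prod_congr rfl fun j _ => ?_
  by_cases hj : j < K
  · rw [rade, hy j hj, rade]
  · rw [digit_eq_zero_of_lt_Mgen (h.trans_le (Mgen_mono hm (not_lt.1 hj))), pow_zero, pow_zero]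

theorem norm_rade (k : ℕ) (x : Gm m) : ‖rade m k x‖ = 1 := by
  have h : 2 * Real.pi * Complex.I * (((x k).val : ℕ) : ℂ) / ((m k : ℕ) : ℂ)
      = ((2 * Real.pi * ((x k).val : ℝ) / (m k : ℝ) : ℝ) : ℂ) * Complex.I := by
    push_cast; ring
  rw [rade, h, Complex.norm_exp_ofReal_mul_I]

theorem norm_psi (n : ℕ) (x : Gm m) : ‖psi m n x‖ = 1 := by
  rw [psi, norm_prod]
  exact Finset.prod_eq_one fun j _ => by rw [norm_pow, norm_rade, one_pow]

theorem enorm_psi (n : ℕ) (x : Gm m) : ‖psi m n x‖ₑ = 1 := by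
  rw [← ofReal_norm, norm_psi, ENNReal.ofReal_one]

theorem measurable_psi (n : ℕ) : Measurable (psi m n) :=
  Finset.measurable_prod _ fun j _ => Measurable.pow_const
    ((by measurability : Measurable fun z : ZMod (m j) =>
      Complex.exp (2 * Real.pi * Complex.I * (z.val : ℂ) / (m j : ℂ))).comp
      (measurable_pi_apply j)) _

namespace IsVMartingale
variable {μ : Measure (Gm m)} {f : ℕ → Gm m → ℂ}

theorem eq_of_mem_cyl (hf : IsVMartingale m μ f) {K : ℕ} {x y : Gm m} (hy : y ∈ cyl m K x) :
    f K y = f K x := by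
  rw [hf.2 K K le_rfl y, hf.2 K K le_rfl x, cyl_eq_of_mem hy]

theorem setIntegral_cyl_eq (hm : ∀ k, 0 < m k) (hf : IsVMartingale m μ f) {K N : ℕ}
    (hKN : K ≤ N) (x : Gm m) :
    ∫ y in cyl m K x, f N y ∂μ = ∫ y in cyl m K x, f K y ∂μ := by
  have hM : (Mgen m K : ℂ) ≠ 0 := Nat.cast_ne_zero.2 (Mgen_pos hm K).ne'
  exact mul_left_cancel₀ hM ((hf.2 K N hKN x).symm.trans (hf.2 K K le_rfl x))

theorem integral_mul_eq_of_const_on_cyl (hm : ∀ k, 0 < m k) (hf : IsVMartingale m μ f)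
    {K N : ℕ} (hKN : K ≤ N) {g : Gm m → ℂ} (hg : Measurable g) {C : ℝ} (hgC : ∀ x, ‖g x‖ ≤ C)
    (hgK : ∀ x, ∀ y ∈ cyl m K x, g y = g x) :
    ∫ x, f N x * g x ∂μ = ∫ x, f K x * g x ∂μ := by
  have : ∀ k, NeZero (m k) := fun k => ⟨(hm k).ne'⟩
  set ρ : Gm m → ∀ j : Finset.range K, ZMod (m j) := (Finset.range K).restrict
  have hfiber : ∀ x, ρ ⁻¹' {ρ x} = cyl m K x := fun x => by
    ext y
    simp [ρ, cyl, funext_iff]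
  have hint : ∀ L, Integrable (fun x => f L x * g x) μ := fun L =>
    (hf.1 L).mul_bdd hg.aestronglyMeasurable (Eventually.of_forall hgC)
  rw [integral_eq_sum_setIntegral_fiber (Finset.measurable_restrict _) (hint N),
    integral_eq_sum_setIntegral_fiber (Finset.measurable_restrict _) (hint K)]
  refine Finset.sum_congr rfl fun a _ => ?_
  rcases (ρ ⁻¹' {a}).eq_empty_or_nonempty with he | ⟨x, rfl : ρ x = a⟩
  · rw [he, Measure.restrict_empty, integral_zero_measure, integral_zero_measure]
  have hconst : ∀ L, ∫ y in cyl m K x, f L y * g y ∂μ = (∫ y in cyl m K x, f L y ∂μ) * g x :=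
    fun L => by
      rw [← integral_mul_const]
      exact setIntegral_congr_fun (measurableSet_cyl K x) fun y hy => by rw [hgK x y hy]
  rw [hfiber, hconst, hconst, hf.setIntegral_cyl_eq hm hKN]

theorem mfhat_eq_integral (hm : ∀ k, 0 < m k) (hf : IsVMartingale m μ f) {n K : ℕ}
    (hnK : n < Mgen m K) (hKn : K ≤ n + 1) :
    mfhat m μ f n = ∫ x, f K x * starRingEnd ℂ (psi m n x) ∂μ :=
  hf.integral_mul_eq_of_const_on_cyl hm hKn
    (continuous_star.measurable.comp (measurable_psi n))
    (fun x => (RCLike.norm_conj _).trans_le (norm_psi n x).le)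
    fun x y hy => by rw [psi_eq_of_mem_cyl hm hnK hy]

theorem rpow_enorm_le_Mgen_mul (hm : ∀ k, 0 < m k) (hf : IsVMartingale m μ f)
    (hμ : ∀ n x, μ (cyl m n x) = (Mgen m n : ℝ≥0∞)⁻¹)
    {p : ℝ} (hp : 0 ≤ p) (K : ℕ) (x : Gm m) :
    ‖f K x‖ₑ ^ p ≤ Mgen m K * ∫⁻ y, (⨆ n, ‖f n y‖ₑ) ^ p ∂μ := by
  have hM0 : (Mgen m K : ℝ≥0∞) ≠ 0 := Nat.cast_ne_zero.2 (Mgen_pos hm K).ne'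
  have hcyl : ‖f K x‖ₑ ^ p / Mgen m K ≤ ∫⁻ y, (⨆ n, ‖f n y‖ₑ) ^ p ∂μ :=
    calc ‖f K x‖ₑ ^ p / Mgen m K = ∫⁻ y in cyl m K x, ‖f K y‖ₑ ^ p ∂μ := by
          rw [setLIntegral_congr_fun (measurableSet_cyl K x) fun y hy => by
            rw [hf.eq_of_mem_cyl hy], setLIntegral_const, hμ, div_eq_mul_inv]
      _ ≤ ∫⁻ y, ‖f K y‖ₑ ^ p ∂μ := setLIntegral_le_lintegral _ _
      _ ≤ ∫⁻ y, (⨆ n, ‖f n y‖ₑ) ^ p ∂μ := lintegral_rpow_enorm_le_lintegral_rpow_iSup f hp K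
  rw [mul_comm]
  exact (ENNReal.div_le_iff hM0 (ENNReal.natCast_ne_top _)).1 hcyl

theorem lintegral_enorm_le_Mgen_rpow_mul_HpNorm (hm : ∀ k, 0 < m k)
    (hf : IsVMartingale m μ f)
    (hμ : ∀ n x, μ (cyl m n x) = (Mgen m n : ℝ≥0∞)⁻¹) {p : ℝ} (hp0 : 0 < p) (hp1 : p ≤ 1)
    (K : ℕ) : ∫⁻ x, ‖f K x‖ₑ ∂μ ≤ (Mgen m K : ℝ≥0∞) ^ (1 / p - 1) * HpNorm m μ p f := by
  have hq : 0 ≤ 1 / p - 1 := sub_nonneg.2 (one_le_one_div hp0 hp1)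
  set L := ∫⁻ y, (⨆ n, ‖f n y‖ₑ) ^ p ∂μ
  calc ∫⁻ x, ‖f K x‖ₑ ∂μ ≤ (Mgen m K * L) ^ (1 / p - 1) * ∫⁻ x, ‖f K x‖ₑ ^ p ∂μ :=
        lintegral_le_rpow_mul_lintegral_rpow (hf.1 K).aestronglyMeasurable.enorm hp0 hp1
          (hf.rpow_enorm_le_Mgen_mul hm hμ hp0.le K)
    _ ≤ (Mgen m K * L) ^ (1 / p - 1) * L := by
        gcongr; exact lintegral_rpow_enorm_le_lintegral_rpow_iSup f hp0.le K
    _ = (Mgen m K : ℝ≥0∞) ^ (1 / p - 1) * L ^ (1 / p) := by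
        rw [ENNReal.mul_rpow_of_nonneg _ _ hq, mul_assoc]
        nth_rw 2 [← ENNReal.rpow_one L]
        rw [← ENNReal.rpow_add_of_nonneg _ _ hq zero_le_one, sub_add_cancel]
    _ = (Mgen m K : ℝ≥0∞) ^ (1 / p - 1) * HpNorm m μ p f := rfl

end IsVMartingale

end Vilenkin

/-- For `0 < p < 1` there is a constant `c_p > 0`, depending only on `p` and
`λ = sup_k m_k`, such that every martingale `f ∈ H_p(G_m)` satisfies
`|f̂(n)| ≤ c_p n^{1/p-1} ‖f‖_{H_p}` for all `n ≥ 1`. -/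
theorem vilenkin_fourier_coefficient_bound_martingale
    (p : ℝ) (hp0 : 0 < p) (hp1 : p < 1) (lam : ℕ) :
    ∃ c : ℝ, 0 < c ∧
      ∀ (m : ℕ → ℕ), (∀ k, 2 ≤ m k) → (∀ k, m k ≤ lam) →
      ∀ (μ : Measure (Gm m)), (∀ n x, μ (cyl m n x) = ((Mgen m n : ℝ≥0∞))⁻¹) →
      ∀ f : ℕ → Gm m → ℂ, IsVMartingale m μ f → HpNorm m μ p f < ⊤ →
      ∀ n : ℕ, 1 ≤ n →
        ENNReal.ofReal ‖mfhat m μ f n‖ ≤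
          ENNReal.ofReal (c * (n : ℝ) ^ (1 / p - 1)) * HpNorm m μ p f := by
  have hq : 0 ≤ 1 / p - 1 := sub_nonneg.2 (one_le_one_div hp0 hp1.le)
  refine ⟨((lam : ℝ) + 1) ^ (1 / p - 1), by positivity, ?_⟩
  intro m hm2 hmlam μ hμ f hf _ n hn
  have hm : ∀ k, 0 < m k := fun k => two_pos.trans_le (hm2 k)
  obtain ⟨K, hKn, hnK⟩ := exists_Mgen_le_lt_Mgen_succ hm2 hn
  have hMK : (Mgen m (K + 1) : ℝ) ≤ (lam + 1) * n := by
    exact_mod_cast Nat.mul_le_mul ((hmlam K).trans lam.le_succ) hKn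
  calc ENNReal.ofReal ‖mfhat m μ f n‖
      = ‖∫ x, f (K + 1) x * starRingEnd ℂ (psi m n x) ∂μ‖ₑ := by
        rw [hf.mfhat_eq_integral hm hnK (by have := lt_Mgen hm2 K; omega), ofReal_norm]
    _ ≤ ∫⁻ x, ‖f (K + 1) x * starRingEnd ℂ (psi m n x)‖ₑ ∂μ :=
        enorm_integral_le_lintegral_enorm _
    _ = ∫⁻ x, ‖f (K + 1) x‖ₑ ∂μ := by
        simp only [enorm_mul, RCLike.enorm_conj, enorm_psi, mul_one]
    _ ≤ (Mgen m (K + 1) : ℝ≥0∞) ^ (1 / p - 1) * HpNorm m μ p f :=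
        hf.lintegral_enorm_le_Mgen_rpow_mul_HpNorm hm hμ hp0 hp1.le _
    _ ≤ ENNReal.ofReal (((lam : ℝ) + 1) ^ (1 / p - 1) * (n : ℝ) ^ (1 / p - 1)) *
          HpNorm m μ p f := by
        rw [← Real.mul_rpow (by positivity) (by positivity),
          ← ENNReal.ofReal_rpow_of_nonneg (by positivity) hq]
        gcongr
        rw [← ENNReal.ofReal_natCast]
        exact ENNReal.ofReal_le_ofReal hMK

end
end

section
/- Let 0 < p < 1. There exists a constant c_p > 0, depending only on p and λ = sup_k m_k, such that for every f ∈ L¹(G_m, μ) whose martingale maximal function sup_k |S_{M_k} f| belongs to L^p(μ), one has for every integer n ≥ 1: |f̂(n)| ≤ c_p · n^{1/p−1} · ‖sup_k |S_{M_k} f|‖_{L^p(μ)}. (Here (S_{M_k} f)_{k≥0} is the martingale generated by f, and ‖sup_k |S_{M_k} f|‖_{L^p} is its H_p-norm.) -/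
open MeasureTheory Filter ENNReal Finset

noncomputable section

/-!
Choose `k` with `M_k ≤ n < M_{k+1}`. By orthogonality of the Vilenkin system, `f̂(n)` is also the
`n`-th coefficient of the martingale difference `d = S_{M_{k+1}} f - S_{M_k} f`, so
`|f̂(n)| ≤ ‖d‖₁`. The function `d` is constant on each of the `M_{k+1}` cylinders of level `k + 1`,
which all have measure `1 / M_{k+1}`; superadditivity of `t ↦ t^{1/p}` then gives the reverse
Hölder inequality `‖d‖₁ ≤ M_{k+1}^{1/p-1} ‖d‖_p`. Finally `|d| ≤ 2 sup_j |S_{M_j} f|` and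
`M_{k+1} = m_k M_k ≤ λ n`.
-/

theorem ENNReal.rpow_sum_le_sum_rpow {ι : Type*} (s : Finset ι) (f : ι → ℝ≥0∞) {p : ℝ}
    (hp0 : 0 < p) (hp1 : p ≤ 1) : (∑ i ∈ s, f i) ^ p ≤ ∑ i ∈ s, f i ^ p := by
  classical
  induction s using Finset.induction with
  | empty => simp [ENNReal.zero_rpow_of_pos hp0]
  | insert i s hi ih =>
    rw [sum_insert hi, sum_insert hi]
    exact (ENNReal.rpow_add_le_add_rpow _ _ hp0.le hp1).trans (add_le_add_right ih _)

theorem ENNReal.sum_le_rpow_sum_rpow {ι : Type*} (s : Finset ι) (f : ι → ℝ≥0∞) {p : ℝ}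
    (hp0 : 0 < p) (hp1 : p ≤ 1) : ∑ i ∈ s, f i ≤ (∑ i ∈ s, f i ^ p) ^ (1 / p) := by
  calc ∑ i ∈ s, f i = ((∑ i ∈ s, f i) ^ p) ^ (1 / p) := by
        rw [← ENNReal.rpow_mul, mul_one_div_cancel hp0.ne', ENNReal.rpow_one]
    _ ≤ (∑ i ∈ s, f i ^ p) ^ (1 / p) :=
        ENNReal.rpow_le_rpow (ENNReal.rpow_sum_le_sum_rpow s f hp0 hp1) (by positivity)

section EqualAtoms

variable {α ι : Type*} [MeasurableSpace α] [MeasurableSpace ι] [MeasurableSingletonClass ι]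
  [Fintype ι] {μ : Measure α} {π : α → ι} {c : ℝ≥0∞}

theorem lintegral_comp_of_map_eq_smul_count (hπ : Measurable π) (hμ : μ.map π = c • Measure.count)
    (g : ι → ℝ≥0∞) : ∫⁻ x, g (π x) ∂μ = c * ∑ i, g i := by
  rw [← lintegral_map (measurable_of_finite g) hπ, hμ, lintegral_smul_measure, lintegral_count,
    tsum_fintype, smul_eq_mul]

theorem integral_comp_of_map_eq_smul_count {E : Type*} [NormedAddCommGroup E] [NormedSpace ℝ E]
    [CompleteSpace E] (hπ : Measurable π) (hμ : μ.map π = c • Measure.count) (F : ι → E) :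
    ∫ x, F (π x) ∂μ = c.toReal • ∑ i, F i := by
  rw [← integral_map hπ.aemeasurable AEStronglyMeasurable.of_discrete, hμ,
    integral_smul_measure, integral_count]

theorem integrable_comp_of_map_eq_smul_count {E : Type*} [NormedAddCommGroup E]
    (hπ : Measurable π) (hμ : μ.map π = c • Measure.count) (hc : c ≠ ⊤) (F : ι → E) :
    Integrable (fun x => F (π x)) μ := by
  have : IsFiniteMeasure (μ.map π) := by
    rw [hμ]
    exact ⟨ENNReal.mul_lt_top hc.lt_top (measure_lt_top _ _)⟩
  exact (integrable_map_measure AEStronglyMeasurable.of_discrete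
    hπ.aemeasurable).1 Integrable.of_finite

/-- Nikolskii-type reverse Hölder inequality for functions constant on the atoms of a finite
partition into sets of equal mass `c`. -/
theorem lintegral_comp_le_of_map_eq_smul_count (hπ : Measurable π)
    (hμ : μ.map π = c • Measure.count) (hc0 : c ≠ 0) (hc : c ≠ ⊤) (g : ι → ℝ≥0∞) {p : ℝ}
    (hp0 : 0 < p) (hp1 : p ≤ 1) :
    ∫⁻ x, g (π x) ∂μ ≤ c ^ (1 - 1 / p) * (∫⁻ x, g (π x) ^ p ∂μ) ^ (1 / p) := by
  have hc_split : c = c ^ (1 - 1 / p) * c ^ (1 / p) := by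
    rw [← ENNReal.rpow_add _ _ hc0 hc, sub_add_cancel, ENNReal.rpow_one]
  rw [lintegral_comp_of_map_eq_smul_count hπ hμ,
    lintegral_comp_of_map_eq_smul_count hπ hμ (fun i => g i ^ p),
    ENNReal.mul_rpow_of_nonneg _ _ (by positivity), ← mul_assoc, ← hc_split]
  gcongr
  exact ENNReal.sum_le_rpow_sum_rpow _ g hp0 hp1

end EqualAtoms

namespace Vilenkin

variable {m : ℕ → ℕ}

theorem Mgen_zero (m : ℕ → ℕ) : Mgen m 0 = 1 := rfl

theorem Mgen_succ (m : ℕ → ℕ) (k : ℕ) : Mgen m (k + 1) = m k * Mgen m k := rfl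

theorem Mgen_pos [∀ k, NeZero (m k)] (k : ℕ) : 0 < Mgen m k := by
  induction k with
  | zero => exact Nat.one_pos
  | succ k ih => exact Nat.mul_pos (Nat.pos_of_neZero _) ih

theorem Mgen_eq_prod (N : ℕ) : Mgen m N = ∏ i : Fin N, m i := by
  rw [← Finset.prod_range]
  induction N with
  | zero => rfl
  | succ N ih => rw [Mgen_succ, ih, prod_range_succ, mul_comm]

theorem Mgen_mono [∀ k, NeZero (m k)] : Monotone (Mgen m) :=
  monotone_nat_of_le_succ fun _ => Nat.le_mul_of_pos_left _ (Nat.pos_of_neZero _)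

theorem Mgen_strictMono (hm : ∀ k, 2 ≤ m k) : StrictMono (Mgen m) := by
  have : ∀ k, NeZero (m k) := fun k => ⟨by linarith [hm k]⟩
  exact strictMono_nat_of_lt_succ fun k =>
    (Nat.lt_mul_iff_one_lt_left (Mgen_pos k)).2 (hm k)

theorem lt_Mgen (hm : ∀ k, 2 ≤ m k) (k : ℕ) : k < Mgen m k := by
  have := (Mgen_strictMono hm).add_le_nat k 0
  rw [add_zero, Mgen_zero] at this
  omega

theorem exists_Mgen_le_lt (hm : ∀ k, 2 ≤ m k) {n : ℕ} (hn : 1 ≤ n) :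
    ∃ k, Mgen m k ≤ n ∧ n < Mgen m (k + 1) := by
  obtain ⟨k, hk, hk'⟩ := (Mgen_strictMono hm).exists_between_of_tendsto_atTop
    (Mgen_strictMono hm).tendsto_atTop (x := n + 1) (by simp [Mgen]; omega)
  exact ⟨k, by omega, by omega⟩

theorem digit_eq_zero_of_lt {n j : ℕ} (h : n < Mgen m j) : digit m n j = 0 := by
  simp [digit, Nat.div_eq_of_lt h]

theorem mod_Mgen_eq_sum_digit (n N : ℕ) :
    n % Mgen m N = ∑ i ∈ range N, digit m n i * Mgen m i := by
  induction N with
  | zero => simp [Mgen, Nat.mod_one]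
  | succ N ih => rw [Mgen_succ, mul_comm, Nat.mod_mul, ih, sum_range_succ, digit]; ring

theorem eq_of_digit_eq {N j n : ℕ} (hj : j < Mgen m N) (hn : n < Mgen m N)
    (h : ∀ i < N, digit m j i = digit m n i) : j = n := by
  rw [← Nat.mod_eq_of_lt hj, ← Nat.mod_eq_of_lt hn, mod_Mgen_eq_sum_digit, mod_Mgen_eq_sum_digit]
  exact sum_congr rfl fun i hi => by rw [h i (mem_range.1 hi)]

theorem natCast_digit_inj {j n i : ℕ} :
    (digit m j i : ZMod (m i)) = digit m n i ↔ digit m j i = digit m n i := by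
  rw [ZMod.natCast_eq_natCast_iff', digit, digit, Nat.mod_mod, Nat.mod_mod]

def truncate (m : ℕ → ℕ) (N : ℕ) (x : Gm m) (i : Fin N) : ZMod (m i) := x i

theorem measurable_truncate (N : ℕ) : Measurable (truncate m N) :=
  measurable_pi_lambda _ fun i => measurable_pi_apply (i : ℕ)

theorem truncate_surjective (N : ℕ) : Function.Surjective (truncate m N) := fun a =>
  ⟨fun j => if h : j < N then a ⟨j, h⟩ else 0, funext fun i => dif_pos i.isLt⟩

theorem truncate_preimage_singleton (N : ℕ) (x : Gm m) :
    truncate m N ⁻¹' {truncate m N x} = cyl m N x := by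
  ext y
  simp [truncate, cyl, funext_iff, Fin.forall_iff]

theorem map_truncate [∀ k, NeZero (m k)] {μ : Measure (Gm m)}
    (hμ : ∀ n x, μ (cyl m n x) = (Mgen m n : ℝ≥0∞)⁻¹) (N : ℕ) : μ.map (truncate m N) = (Mgen m N : ℝ≥0∞)⁻¹ • Measure.count := by
  refine Measure.ext_iff_singleton.2 fun a => ?_
  obtain ⟨x, rfl⟩ := truncate_surjective N a
  rw [Measure.map_apply (measurable_truncate N) (measurableSet_singleton _),
    truncate_preimage_singleton, hμ, Measure.smul_apply, Measure.count_singleton, smul_eq_mul,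
    mul_one]

/-- `ψ_n` as a character of the finite group `∏_{i<N} ℤ_{m_i}`. -/
def vchar (m : ℕ → ℕ) [∀ k, NeZero (m k)] (N n : ℕ) (a : (i : Fin N) → ZMod (m i)) : ℂ :=
  ∏ i : Fin N, ZMod.stdAddChar ((digit m n i : ZMod (m i)) * a i)

theorem rade_eq_stdAddChar [∀ k, NeZero (m k)] (k : ℕ) (x : Gm m) :
    rade m k x = ZMod.stdAddChar (x k) := by
  rw [ZMod.stdAddChar_apply, ZMod.toCircle_apply, rade]

theorem enorm_psi [∀ k, NeZero (m k)] (n : ℕ) (x : Gm m) : ‖psi m n x‖ₑ = 1 := by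
  rw [← ofReal_norm]
  simp [psi, rade_eq_stdAddChar, ZMod.stdAddChar_apply, Circle.norm_coe]

theorem psi_eq_vchar_truncate [∀ k, NeZero (m k)] (hm : ∀ k, 2 ≤ m k) {N n : ℕ}
    (hn : n < Mgen m N) (x : Gm m) :
    psi m n x = vchar m N n (truncate m N x) := by
  have hdigit : ∀ i, N ≤ i ∨ n < i → rade m i x ^ digit m n i = 1 := fun i hi => by
    rw [digit_eq_zero_of_lt, pow_zero]
    rcases hi with hi | hi
    · exact hn.trans_le (Mgen_mono hi)
    · exact hi.trans (lt_Mgen hm i)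
  calc psi m n x = ∏ i ∈ range (max N (n + 1)), rade m i x ^ digit m n i :=
        prod_subset (range_subset_range.2 (le_max_right _ _)) fun i _ hi =>
          hdigit i (Or.inr (by simpa using hi))
    _ = ∏ i ∈ range N, rade m i x ^ digit m n i :=
        (prod_subset (range_subset_range.2 (le_max_left _ _)) fun i _ hi =>
          hdigit i (Or.inl (by simpa using hi))).symm
    _ = vchar m N n (truncate m N x) := by
        rw [prod_range, vchar]
        refine prod_congr rfl fun i _ => ?_
        rw [rade_eq_stdAddChar, ← AddChar.map_nsmul_eq_pow, nsmul_eq_mul]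
        rfl

theorem sum_vchar_mul_conj_vchar [∀ k, NeZero (m k)] {N j n : ℕ} (hj : j < Mgen m N)
    (hn : n < Mgen m N) :
    ∑ a, vchar m N j a * starRingEnd ℂ (vchar m N n a) = if j = n then (Mgen m N : ℂ) else 0 := by
  have hfactor : ∀ a, vchar m N j a * starRingEnd ℂ (vchar m N n a) =
      ∏ i : Fin N,
        ZMod.stdAddChar (a i * ((digit m j i : ZMod (m i)) - (digit m n i : ZMod (m i)))) :=
      fun a => by
    simp only [vchar, map_prod, ← prod_mul_distrib, ← AddChar.map_neg_eq_conj,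
      ← AddChar.map_add_eq_mul]
    exact prod_congr rfl fun i _ => by ring_nf
  rw [Fintype.sum_congr _ _ hfactor, ← Fintype.prod_sum (fun (i : Fin N) (c : ZMod (m i)) =>
    ZMod.stdAddChar (c * ((digit m j i : ZMod (m i)) - (digit m n i : ZMod (m i)))))]
  simp_rw [AddChar.sum_mulShift _ (ZMod.isPrimitive_stdAddChar _), ZMod.card, sub_eq_zero,
    natCast_digit_inj]
  split_ifs with hjn
  · simp [hjn, Mgen_eq_prod]
  · obtain ⟨i, hi⟩ : ∃ i : Fin N, digit m j i ≠ digit m n i := by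
      by_contra! h
      exact hjn (eq_of_digit_eq hj hn fun i hi => h ⟨i, hi⟩)
    exact prod_eq_zero (mem_univ i) (by simp [hi])

section PartialSums

variable [∀ k, NeZero (m k)] {μ : Measure (Gm m)}

theorem Spart_eq_sum_vchar_truncate (hm : ∀ k, 2 ≤ m k) (f : Gm m → ℂ) {N L : ℕ}
    (hL : L ≤ Mgen m N) (x : Gm m) :
    Spart m μ f L x = ∑ k ∈ range L, fcoef m μ f k * vchar m N k (truncate m N x) :=
  sum_congr rfl fun k hk => by rw [psi_eq_vchar_truncate hm ((mem_range.1 hk).trans_le hL)]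

theorem integrable_Spart_mul_conj_psi (hm : ∀ k, 2 ≤ m k)
    (hμ : ∀ n x, μ (cyl m n x) = (Mgen m n : ℝ≥0∞)⁻¹) (f : Gm m → ℂ) (L n : ℕ) :
    Integrable (fun x => Spart m μ f L x * starRingEnd ℂ (psi m n x)) μ := by
  obtain ⟨N, hN⟩ : ∃ N, max L (n + 1) ≤ Mgen m N := ⟨_, (lt_Mgen hm _).le⟩
  simp_rw [Spart_eq_sum_vchar_truncate hm f (le_of_max_le_left hN),
    psi_eq_vchar_truncate hm (le_of_max_le_right hN)]
  exact integrable_comp_of_map_eq_smul_count (measurable_truncate N) (map_truncate hμ N)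
    (by simp [(Mgen_pos N).ne']) (fun a => (∑ k ∈ range L, fcoef m μ f k * vchar m N k a) *
      starRingEnd ℂ (vchar m N n a))

theorem integral_Spart_mul_conj_psi (hm : ∀ k, 2 ≤ m k)
    (hμ : ∀ n x, μ (cyl m n x) = (Mgen m n : ℝ≥0∞)⁻¹) (f : Gm m → ℂ) {N L n : ℕ}
    (hL : L ≤ Mgen m N) (hn : n < Mgen m N) :
    ∫ x, Spart m μ f L x * starRingEnd ℂ (psi m n x) ∂μ = if n < L then fcoef m μ f n else 0 := by
  simp_rw [Spart_eq_sum_vchar_truncate hm f hL, psi_eq_vchar_truncate hm hn]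
  rw [integral_comp_of_map_eq_smul_count (measurable_truncate N) (map_truncate hμ N)
    (fun a => (∑ k ∈ range L, fcoef m μ f k * vchar m N k a) * starRingEnd ℂ (vchar m N n a))]
  simp_rw [sum_mul, mul_assoc]
  rw [sum_comm, sum_congr rfl fun k hk => by
    rw [← mul_sum, sum_vchar_mul_conj_vchar ((mem_range.1 hk).trans_le hL) hn, mul_ite, mul_zero]]
  have hM : (Mgen m N : ℂ) ≠ 0 := Nat.cast_ne_zero.2 (Mgen_pos N).ne'
  split_ifs with hnL
  · simp [sum_ite_eq', hnL]
    field_simp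
  · simp [sum_ite_eq', hnL]

theorem fcoef_eq_integral_Spart_sub_mul_conj_psi (hm : ∀ k, 2 ≤ m k)
    (hμ : ∀ n x, μ (cyl m n x) = (Mgen m n : ℝ≥0∞)⁻¹) (f : Gm m → ℂ) {k n : ℕ}
    (hk : Mgen m k ≤ n) (hn : n < Mgen m (k + 1)) :
    fcoef m μ f n = ∫ x, (Spart m μ f (Mgen m (k + 1)) x - Spart m μ f (Mgen m k) x) *
      starRingEnd ℂ (psi m n x) ∂μ := by
  simp_rw [sub_mul]
  rw [integral_sub (integrable_Spart_mul_conj_psi hm hμ f _ n)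
      (integrable_Spart_mul_conj_psi hm hμ f _ n),
    integral_Spart_mul_conj_psi hm hμ f le_rfl hn,
    integral_Spart_mul_conj_psi hm hμ f (Mgen_mono k.le_succ) hn, if_pos hn,
    if_neg hk.not_gt, sub_zero]

theorem lintegral_enorm_Spart_sub_le (hm : ∀ k, 2 ≤ m k)
    (hμ : ∀ n x, μ (cyl m n x) = (Mgen m n : ℝ≥0∞)⁻¹) (f : Gm m → ℂ) {N L : ℕ}
    (hL : L ≤ Mgen m N) {p : ℝ} (hp0 : 0 < p) (hp1 : p ≤ 1) :
    ∫⁻ x, ‖Spart m μ f (Mgen m N) x - Spart m μ f L x‖ₑ ∂μ ≤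
      (Mgen m N : ℝ≥0∞) ^ (1 / p - 1) *
        eLpNorm' (Spart m μ f (Mgen m N) - Spart m μ f L) p μ := by
  set D : ((i : Fin N) → ZMod (m i)) → ℂ := fun a =>
    ∑ k ∈ range (Mgen m N), fcoef m μ f k * vchar m N k a -
      ∑ k ∈ range L, fcoef m μ f k * vchar m N k a
  have hD : Spart m μ f (Mgen m N) - Spart m μ f L = fun x => D (truncate m N x) := by
    ext x
    simp only [Pi.sub_apply, D, Spart_eq_sum_vchar_truncate hm f le_rfl,
      Spart_eq_sum_vchar_truncate hm f hL]
  have hM : (Mgen m N : ℝ≥0∞) ≠ 0 := by simp [(Mgen_pos N).ne']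
  have := lintegral_comp_le_of_map_eq_smul_count (measurable_truncate N) (map_truncate hμ N)
    (by simp) (ENNReal.inv_ne_top.2 hM) (fun a => ‖D a‖ₑ) hp0 hp1
  rw [ENNReal.inv_rpow, ← ENNReal.rpow_neg, neg_sub] at this
  simp only [← Pi.sub_apply (Spart m μ f (Mgen m N)), hD, eLpNorm'_eq_lintegral_enorm]
  exact this

end PartialSums

theorem HpNorm_eq_eLpNorm' (μ : Measure (Gm m)) (p : ℝ) (F : ℕ → Gm m → ℂ) :
    HpNorm m μ p F = eLpNorm' (fun x => ⨆ n, ‖F n x‖ₑ) p μ := by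
  simp [HpNorm, eLpNorm'_eq_lintegral_enorm, enorm_eq_nnnorm]

theorem eLpNorm'_sub_le_two_mul_HpNorm (μ : Measure (Gm m)) (F : ℕ → Gm m → ℂ) (i j : ℕ)
    {p : ℝ} (hp0 : 0 < p) : eLpNorm' (F i - F j) p μ ≤ 2 * HpNorm m μ p F := by
  rw [HpNorm_eq_eLpNorm']
  refine (eLpNorm'_le_nnreal_smul_eLpNorm'_of_ae_le_mul' (c := 2)
    (g := fun x => ⨆ n, ‖F n x‖ₑ) (ae_of_all _ fun x => ?_) hp0).trans_eq
    (by simp [ENNReal.smul_def])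
  rw [enorm_eq_self, ENNReal.coe_ofNat, two_mul]
  exact enorm_sub_le.trans (add_le_add (le_iSup (fun n => ‖F n x‖ₑ) i)
    (le_iSup (fun n => ‖F n x‖ₑ) j))

end Vilenkin

open Vilenkin in
/-- For `0 < p < 1` there is `c_p > 0`, depending only on `p` and `λ = sup_k m_k`,
such that every `f ∈ L¹(G_m)` whose martingale maximal function
`sup_k |S_{M_k} f|` is in `L^p` satisfies
`|f̂(n)| ≤ c_p n^{1/p-1} ‖sup_k |S_{M_k} f|‖_{L^p}` for all `n ≥ 1`. -/
theorem vilenkin_fourier_coefficient_bound_function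
    (p : ℝ) (hp0 : 0 < p) (hp1 : p < 1) (lam : ℕ) :
    ∃ c : ℝ, 0 < c ∧
      ∀ (m : ℕ → ℕ), (∀ k, 2 ≤ m k) → (∀ k, m k ≤ lam) →
      ∀ (μ : Measure (Gm m)), (∀ n x, μ (cyl m n x) = ((Mgen m n : ℝ≥0∞))⁻¹) →
      ∀ f : Gm m → ℂ, Integrable f μ →
      HpNorm m μ p (fun k => Spart m μ f (Mgen m k)) < ⊤ →
      ∀ n : ℕ, 1 ≤ n →
        ENNReal.ofReal ‖fcoef m μ f n‖ ≤
          ENNReal.ofReal (c * (n : ℝ) ^ (1 / p - 1)) *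
            HpNorm m μ p (fun k => Spart m μ f (Mgen m k)) := by
  have hθ : 0 ≤ 1 / p - 1 := sub_nonneg.2 (one_le_one_div hp0 hp1.le)
  -- `λ + 1` rather than `λ`, so that `c > 0` also when `λ = 0`
  refine ⟨2 * ((lam : ℝ) + 1) ^ (1 / p - 1), by positivity, ?_⟩
  intro m hm hlam μ hμ f _ _ n hn
  have : ∀ k, NeZero (m k) := fun k => ⟨by linarith [hm k]⟩
  obtain ⟨k, hkn, hnk⟩ := exists_Mgen_le_lt hm hn
  set S := fun j => Spart m μ f (Mgen m j)
  have hMn : (Mgen m (k + 1) : ℝ) ≤ ((lam : ℝ) + 1) * n :=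
    calc (Mgen m (k + 1) : ℝ) ≤ lam * n := mod_cast Nat.mul_le_mul (hlam k) hkn
      _ ≤ ((lam : ℝ) + 1) * n := by gcongr; linarith
  calc ENNReal.ofReal ‖fcoef m μ f n‖
      ≤ ∫⁻ x, ‖S (k + 1) x - S k x‖ₑ ∂μ := by
        rw [fcoef_eq_integral_Spart_sub_mul_conj_psi hm hμ f hkn hnk, ofReal_norm]
        refine (enorm_integral_le_lintegral_enorm _).trans_eq (lintegral_congr fun x => ?_)
        rw [enorm_mul, RCLike.enorm_conj, enorm_psi, mul_one]
    _ ≤ (Mgen m (k + 1) : ℝ≥0∞) ^ (1 / p - 1) * eLpNorm' (S (k + 1) - S k) p μ :=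
        lintegral_enorm_Spart_sub_le hm hμ f (Mgen_mono k.le_succ) hp0 hp1.le
    _ ≤ (Mgen m (k + 1) : ℝ≥0∞) ^ (1 / p - 1) * (2 * HpNorm m μ p S) := by
        gcongr
        exact eLpNorm'_sub_le_two_mul_HpNorm μ S _ _ hp0
    _ ≤ ENNReal.ofReal (2 * ((lam : ℝ) + 1) ^ (1 / p - 1) * (n : ℝ) ^ (1 / p - 1)) *
          HpNorm m μ p S := by
        rw [← mul_assoc, mul_comm _ (2 : ℝ≥0∞), ← ENNReal.ofReal_natCast,
          ENNReal.ofReal_rpow_of_nonneg (Nat.cast_nonneg _) hθ, ← ENNReal.ofReal_ofNat 2,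
          ← ENNReal.ofReal_mul zero_le_two, mul_assoc,
          ← Real.mul_rpow (by positivity) n.cast_nonneg]
        gcongr

end
end
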